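/- If a partial coloring of an n×n square uniquely extends to L(n, 2n-2), then no row and no column contains three or more uncolored entries. -/

import Mathlib

/-- An `L(n,k)`: an `n × n` array colored with `k` colors such that all entries
in any row and any column have distinct colors. -/
def IsLatin (n k : ℕ) (L : Fin n → Fin n → Fin k) : Prop :=
  (∀ i : Fin n, Function.Injective (L i)) ∧
  (∀ j : Fin n, Function.Injective (fun i => L i j))

/-- `L` extends the partial coloring `P`. -/
def ExtendsPC {n k : ℕ} (P : Fin n → Fin n → Option (Fin k))
    (L : Fin n → Fin n → Fin k) : Prop :=
  ∀ i j c, P i j = some c → L i j = c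

/-- The partial coloring `P` uniquely extends to an `L(n,k)`. -/
def UniquelyExtends (n k : ℕ) (P : Fin n → Fin n → Option (Fin k)) : Prop :=
  ∃! L : Fin n → Fin n → Fin k, IsLatin n k L ∧ ExtendsPC P L

/-- Number of uncolored entries of a partial coloring. -/
def numUncolored {n k : ℕ} (P : Fin n → Fin n → Option (Fin k)) : ℕ :=
  (Finset.univ.filter (fun p : Fin n × Fin n => P p.1 p.2 = none)).card

/-- Number of colored entries of a partial coloring. -/
def numColored {n k : ℕ} (P : Fin n → Fin n → Option (Fin k)) : ℕ :=
  (Finset.univ.filter (fun p : Fin n × Fin n => P p.1 p.2 ≠ none)).card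

/-- The defining number `d(L(n,k))`. -/
noncomputable def definingNumber (n k : ℕ) : ℕ :=
  sInf {m | ∃ P : Fin n → Fin n → Option (Fin k),
    UniquelyExtends n k P ∧ numColored P = m}

/-- The set of available colors for entry `(i,j)`: colors not appearing among
the colored entries of row `i` or column `j`. -/
def availColors {n k : ℕ} (P : Fin n → Fin n → Option (Fin k)) (i j : Fin n) :
    Finset (Fin k) :=
  Finset.univ.filter (fun c => (∀ w, P i w ≠ some c) ∧ (∀ h, P h j ≠ some c))

/-!
Let `L` be the unique completion and `S` the set of uncolored cells of row `i`. Call a color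
free at `j ∈ S` if it occurs neither in column `j` outside row `i` nor on a colored cell of row
`i`; with `k ≥ 2n - 2` colors at least `|S| - 1` colors are free at `j`. By uniqueness, row `i`
cannot be rewritten injectively on `S` using free colors. Recoloring a single cell shows that the
free colors at `j` lie among the `|S|` colors `L i '' S`, so they miss at most one of them. For three
cells of `S` this yields a transposition or a 3-cycle of their colors that only uses free colors,
a contradiction. Columns follow by transposing.
-/

open Finset Function

theorem exists_perm_ne_one_of_three {α : Type*} [DecidableEq α] {R : α → α → Prop}
    {a b c : α} (hab : a ≠ b) (hac : a ≠ c) (hbc : b ≠ c)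
    (ha : R a b ∨ R a c) (hb : R b a ∨ R b c) (hc : R c a ∨ R c b) :
    ∃ σ : Equiv.Perm α, σ ≠ 1 ∧ ∀ x, σ x ≠ x → R x (σ x) := by
  have by_swap : ∀ {x y}, x ≠ y → R x y → R y x →
      ∃ σ : Equiv.Perm α, σ ≠ 1 ∧ ∀ x, σ x ≠ x → R x (σ x) := by
    intro x y hxy hxy' hyx
    refine ⟨Equiv.swap x y, fun h => hxy ?_, fun w hw => ?_⟩
    · simpa [h] using Equiv.swap_apply_left x y
    · rw [Equiv.swap_apply_def] at hw ⊢
      split_ifs at hw ⊢ <;> simp_all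
  have by_cycle : ∀ {x y z}, x ≠ y → x ≠ z → y ≠ z → R x y → R y z → R z x →
      ∃ σ : Equiv.Perm α, σ ≠ 1 ∧ ∀ x, σ x ≠ x → R x (σ x) := by
    intro x y z hxy hxz hyz hxy' hyz' hzx
    refine ⟨Equiv.swap x y * Equiv.swap y z, fun h => hxy ?_, fun w hw => ?_⟩
    · have hσx : (Equiv.swap x y * Equiv.swap y z) x = y := by
        simp [Equiv.swap_apply_of_ne_of_ne hxy hxz]
      simpa [h] using hσx
    · simp only [Equiv.Perm.mul_apply, Equiv.swap_apply_def] at hw ⊢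
      split_ifs at hw ⊢ <;> simp_all
  -- each of the eight cases contains a mutually related pair or a 3-cycle
  rcases ha with ha | ha <;> rcases hb with hb | hb <;> rcases hc with hc | hc
  all_goals first
    | exact by_swap hab ‹_› ‹_›
    | exact by_swap hac ‹_› ‹_›
    | exact by_swap hbc ‹_› ‹_›
    | exact by_cycle hab hac hbc ‹_› ‹_› ‹_›
    | exact by_cycle hac hab hbc.symm ‹_› ‹_› ‹_›

section Completion

variable {n k : ℕ} {P : Fin n → Fin n → Option (Fin k)} {L : Fin n → Fin n → Fin k}

theorem isLatin_swap_iff : IsLatin n k (swap L) ↔ IsLatin n k L := And.comm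

theorem extendsPC_swap_iff : ExtendsPC (swap P) (swap L) ↔ ExtendsPC P L := forall_comm

theorem UniquelyExtends.swap (h : UniquelyExtends n k P) : UniquelyExtends n k (swap P) :=
  ((Equiv.piComm _).existsUnique_congr fun _ =>
    (and_congr isLatin_swap_iff extendsPC_swap_iff).symm).mp h

theorem IsLatin.update_row (hL : IsLatin n k L) {i : Fin n} {g : Fin n → Fin k}
    (hg : Injective g) (hcol : ∀ j r, r ≠ i → g j ≠ L r j) :
    IsLatin n k (update L i g) := by
  refine ⟨fun r => ?_, fun j a b hab => ?_⟩
  · rcases eq_or_ne r i with rfl | hr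
    · simpa using hg
    · simpa [hr] using hL.1 r
  · by_cases ha : a = i <;> by_cases hb : b = i
    · rw [ha, hb]
    · subst ha
      simp only [update_self, update_of_ne hb] at hab
      exact absurd hab (hcol j b hb)
    · subst hb
      simp only [update_self, update_of_ne ha] at hab
      exact absurd hab.symm (hcol j a ha)
    · simp only [update_of_ne ha, update_of_ne hb] at hab
      exact hL.2 j hab

theorem ExtendsPC.update_row (hE : ExtendsPC P L) {i : Fin n} {g : Fin n → Fin k}
    (hg : ∀ j, P i j ≠ none → g j = L i j) : ExtendsPC P (update L i g) := by
  intro r j c hc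
  rcases eq_or_ne r i with rfl | hr
  · simpa [hg j (by simp [hc])] using hE r j c hc
  · simpa [hr] using hE r j c hc

theorem UniquelyExtends.row_eq (h : UniquelyExtends n k P) (hL : IsLatin n k L)
    (hE : ExtendsPC P L) (i : Fin n) {g : Fin n → Fin k} (hg : Injective g)
    (hcol : ∀ j r, r ≠ i → g j ≠ L r j) (hfix : ∀ j, P i j ≠ none → g j = L i j) :
    g = L i := by
  simpa using congrFun (h.unique ⟨hL.update_row hg hcol, hE.update_row hfix⟩ ⟨hL, hE⟩) i

def uncoloredInRow (P : Fin n → Fin n → Option (Fin k)) (i : Fin n) : Finset (Fin n) :=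
  univ.filter fun j => P i j = none

def freeColors (P : Fin n → Fin n → Option (Fin k)) (L : Fin n → Fin n → Fin k)
    (i j : Fin n) : Finset (Fin k) :=
  univ.filter fun c => (∀ r, r ≠ i → L r j ≠ c) ∧ ∀ w, P i w ≠ none → L i w ≠ c

theorem card_le_card_freeColors_add (i j : Fin n) :
    k ≤ #(freeColors P L i j) + (n - 1) + #(univ.filter fun w => P i w ≠ none) := by
  have hcover : (univ : Finset (Fin k)) ⊆ freeColors P L i j ∪
      (univ.erase i).image (fun r => L r j) ∪ (univ.filter fun w => P i w ≠ none).image (L i) := by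
    intro c _
    simp only [freeColors, mem_union, mem_image, mem_erase, mem_filter, mem_univ, true_and,
      and_true]
    by_contra! hc
    obtain ⟨⟨hnot_free, hcol⟩, hrow⟩ := hc
    obtain ⟨w, hw, hwc⟩ := hnot_free hcol
    exact hrow w hw hwc
  calc k = #(univ : Finset (Fin k)) := by simp
    _ ≤ _ := card_le_card hcover
    _ ≤ _ := (card_union_le _ _).trans (add_le_add_left (card_union_le _ _) _)
    _ ≤ _ := by
      gcongr
      · exact card_image_le.trans (by simp)
      · exact card_image_le

theorem UniquelyExtends.freeColors_subset (h : UniquelyExtends n k P) (hL : IsLatin n k L)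
    (hE : ExtendsPC P L) {i j : Fin n} (hj : P i j = none) :
    freeColors P L i j ⊆ (uncoloredInRow P i).image (L i) := by
  intro c hc
  by_contra hcC
  simp only [freeColors, mem_filter, mem_univ, true_and] at hc
  obtain ⟨hcol, hrow⟩ := hc
  have hc_new : ∀ w, L i w ≠ c := by
    intro w hw
    by_cases hw' : P i w = none
    · exact hcC (mem_image.2 ⟨w, by simpa [uncoloredInRow] using hw', hw⟩)
    · exact hrow w hw' hw
  have hinj : Injective (update (L i) j c) := by
    intro a b hab
    by_contra hne
    rcases eq_or_ne a j with rfl | ha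
    · rw [update_self, update_of_ne (Ne.symm hne)] at hab
      exact hc_new b hab.symm
    rcases eq_or_ne b j with rfl | hb
    · rw [update_self, update_of_ne ha] at hab
      exact hc_new a hab
    rw [update_of_ne ha, update_of_ne hb] at hab
    exact hne (hL.1 i hab)
  have hrow_eq := h.row_eq hL hE i hinj (fun w r hr => ?_) (fun w hw => ?_)
  · exact hc_new j (by simpa using (congrFun hrow_eq j).symm)
  · rcases eq_or_ne w j with rfl | hw
    · simpa using (hcol r hr).symm
    · simpa [hw] using fun he => hr (hL.2 w he.symm)
  · rw [update_of_ne (by rintro rfl; exact hw hj)]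

theorem UniquelyExtends.mem_freeColors_or (hk : 2 * n ≤ k + 2) (h : UniquelyExtends n k P)
    (hL : IsLatin n k L) (hE : ExtendsPC P L) {i j y z : Fin n} (hj : P i j = none)
    (hy : P i y = none) (hz : P i z = none) (hyz : y ≠ z) :
    L i y ∈ freeColors P L i j ∨ L i z ∈ freeColors P L i j := by
  by_contra! hout
  have hyz' : L i y ≠ L i z := (hL.1 i).ne hyz
  have hsub : insert (L i y) (insert (L i z) (freeColors P L i j)) ⊆
      (uncoloredInRow P i).image (L i) := by
    refine insert_subset (mem_image_of_mem _ ?_) (insert_subset (mem_image_of_mem _ ?_) ?_)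
    · simpa [uncoloredInRow] using hy
    · simpa [uncoloredInRow] using hz
    · exact h.freeColors_subset hL hE hj
  have hupper := card_le_card hsub
  rw [card_insert_of_notMem (by simp [hyz', hout.1]), card_insert_of_notMem hout.2,
    card_image_of_injective _ (hL.1 i)] at hupper
  have hlower := card_le_card_freeColors_add (P := P) (L := L) i j
  have hsplit := card_filter_add_card_filter_not (s := univ) fun w => P i w = none
  rw [card_univ, Fintype.card_fin] at hsplit
  have hn := i.pos
  simp only [uncoloredInRow] at hupper
  simp only [ne_eq] at hlower
  omega

theorem UniquelyExtends.perm_eq_one (h : UniquelyExtends n k P) (hL : IsLatin n k L)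
    (hE : ExtendsPC P L) {i : Fin n} {σ : Equiv.Perm (Fin n)}
    (hσ : ∀ j, σ j ≠ j → P i j = none ∧ L i (σ j) ∈ freeColors P L i j) : σ = 1 := by
  have hrow_eq := h.row_eq hL hE i (g := L i ∘ σ) ((hL.1 i).comp σ.injective)
    (fun j r hr => ?_) (fun j hj => ?_)
  · exact Equiv.ext fun j => hL.1 i (congrFun hrow_eq j)
  · by_cases hσj : σ j = j
    · simpa [hσj] using fun he => hr (hL.2 j he.symm)
    · have hfree := (hσ j hσj).2
      simp only [freeColors, mem_filter] at hfree
      exact fun he => hfree.2.1 r hr he.symm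
  · by_contra hne
    exact hj (hσ j fun he => hne (by simp [he])).1

theorem card_uncoloredInRow_le_two (hk : 2 * n ≤ k + 2) (h : UniquelyExtends n k P)
    (i : Fin n) : #(uncoloredInRow P i) ≤ 2 := by
  obtain ⟨L, hL, hE⟩ := h.exists
  by_contra! h3
  obtain ⟨a, b, c, ha, hb, hc, hab, hac, hbc⟩ := two_lt_card_iff.1 h3
  simp only [uncoloredInRow, mem_filter, mem_univ, true_and] at ha hb hc
  have hR : ∀ {j y z}, P i j = none → P i y = none → P i z = none → y ≠ z →
      (P i j = none ∧ L i y ∈ freeColors P L i j) ∨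
        (P i j = none ∧ L i z ∈ freeColors P L i j) := fun hj hy hz hyz =>
    (h.mem_freeColors_or hk hL hE hj hy hz hyz).imp (⟨hj, ·⟩) (⟨hj, ·⟩)
  obtain ⟨σ, hσ1, hσ⟩ := exists_perm_ne_one_of_three
    (R := fun j y => P i j = none ∧ L i y ∈ freeColors P L i j) hab hac hbc
    (hR ha hb hc hbc) (hR hb ha hc hac) (hR hc ha hb hab)
  exact hσ1 (h.perm_eq_one hL hE hσ)

end Completion

theorem no_three_uncolored_in_line (n : ℕ)
    (P : Fin n → Fin n → Option (Fin (2*n-2)))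
    (h : UniquelyExtends n (2*n-2) P) :
    (∀ i : Fin n, (Finset.univ.filter (fun j : Fin n => P i j = none)).card ≤ 2) ∧
    (∀ j : Fin n, (Finset.univ.filter (fun i : Fin n => P i j = none)).card ≤ 2) :=
  ⟨card_uncoloredInRow_le_two (by omega) h, card_uncoloredInRow_le_two (by omega) h.swap⟩
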